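/- arXiv:0801.2095 — 6 statements merged into one kernel-verified Lean document; each statement's English description precedes it below -/
import Mathlib

section
/- Let w : ℝⁿ → ℝ be a function and x ∈ ℝⁿ. Then w is differentiable at x if and only if there exist C¹ functions f, g : ℝⁿ → ℝ and a neighborhood V of x such that f(x) = g(x) and for all y ∈ V, g(y) ≤ w(y) ≤ f(y). -/
/-!
If `w` is differentiable at `x` with derivative `L`, the remainder `w y - w x - L (y - x)` is
bounded by `‖y - x‖ m(‖y - x‖)` for a monotone modulus `m` tending to `0`. The dyadic mean
`p s = ⨍ t in s..2s, m t` is continuous with `p 0 = 0`, so `h r = ∫ t in r..2r, p t` is `C¹` with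
`h 0 = h' 0 = 0`, and `h r ≥ r m(r)` since `p ≥ m`. Then `y ↦ w x + L (y - x) ± h ‖y - x‖` are the
required `f` and `g`; the radial function is `C¹` at `x` because `h' 0 = 0`. Conversely, `f - g ≥ 0`
vanishes at `x`, so `f` and `g` have the same derivative there, and `w` is squeezed between them.
-/

open Topology Filter Set MeasureTheory intervalIntegral Asymptotics

namespace Monotone

variable {m : ℝ → ℝ} (hm : Monotone m) {a b : ℝ}
include hm

theorem interval_average_mem_Icc (hab : a < b) : ⨍ t in a..b, m t ∈ Icc (m a) (m b) := by
  have hba : 0 < b - a := sub_pos.2 hab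
  have hlower : ∫ t in a..b, m a ≤ ∫ t in a..b, m t :=
    integral_mono_on hab.le intervalIntegrable_const hm.intervalIntegrable fun t ht => hm ht.1
  have hupper : ∫ t in a..b, m t ≤ ∫ t in a..b, m b :=
    integral_mono_on hab.le hm.intervalIntegrable intervalIntegrable_const fun t ht => hm ht.2
  rw [intervalIntegral.integral_const, smul_eq_mul] at hlower hupper
  rw [interval_average_eq_div]
  exact ⟨(le_div_iff₀ hba).2 (by linarith), (div_le_iff₀ hba).2 (by linarith)⟩

end Monotone

theorem continuous_intervalIntegral_self_two_mul {m : ℝ → ℝ}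
    (hm : ∀ a b, IntervalIntegrable m volume a b) :
    Continuous fun s => ∫ t in s..2 * s, m t := by
  have hP := continuous_primitive hm 0
  have : (fun s => ∫ t in s..2 * s, m t) = fun s => (∫ t in 0..2 * s, m t) - ∫ t in 0..s, m t := by
    funext s
    rw [integral_interval_sub_left (hm _ _) (hm _ _)]
  rw [this]
  exact (hP.comp (continuous_const_mul 2)).sub hP

-- At `s = 0` this is the average over an empty interval, i.e. `0`.
noncomputable def dyadicMean (m : ℝ → ℝ) (s : ℝ) : ℝ := ⨍ t in s..2 * s, m t

theorem dyadicMean_eq (m : ℝ → ℝ) (s : ℝ) : dyadicMean m s = s⁻¹ * ∫ t in s..2 * s, m t := by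
  rw [dyadicMean, interval_average_eq, smul_eq_mul, show 2 * s - s = s by ring]

section DyadicMean

variable {m : ℝ → ℝ}

theorem Monotone.dyadicMean_mem_uIcc (hm : Monotone m) {s : ℝ} (hs : s ≠ 0) :
    dyadicMean m s ∈ uIcc (m s) (m (2 * s)) := by
  rcases hs.lt_or_gt with hs | hs
  · rw [dyadicMean, interval_average_symm, uIcc_comm]
    exact Icc_subset_uIcc (hm.interval_average_mem_Icc (by linarith))
  · exact Icc_subset_uIcc (hm.interval_average_mem_Icc (by linarith))

theorem Monotone.continuous_dyadicMean (hm : Monotone m) (h0 : Tendsto m (𝓝 0) (𝓝 0)) :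
    Continuous (dyadicMean m) := by
  rw [continuous_iff_continuousAt]
  intro s
  rcases eq_or_ne s 0 with rfl | hs
  · have h2 : Tendsto (fun s => m (2 * s)) (𝓝 0) (𝓝 0) :=
      h0.comp (by simpa using (continuous_const_mul (2 : ℝ)).tendsto 0)
    have hmem : ∀ᶠ s in 𝓝[≠] 0, dyadicMean m s ∈ uIcc (m s) (m (2 * s)) :=
      eventually_nhdsWithin_of_forall fun s hs => hm.dyadicMean_mem_uIcc hs
    rw [← continuousWithinAt_compl_self, ContinuousWithinAt,
      show dyadicMean m 0 = 0 by simp [dyadicMean_eq]]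
    refine tendsto_of_tendsto_of_tendsto_of_le_of_le' ?_ ?_
      (hmem.mono fun s hs => hs.1) (hmem.mono fun s hs => hs.2)
    · simpa using (h0.min h2).mono_left nhdsWithin_le_nhds
    · simpa using (h0.max h2).mono_left nhdsWithin_le_nhds
  · rw [funext (dyadicMean_eq m)]
    exact (continuousAt_inv₀ hs).mul
      (continuous_intervalIntegral_self_two_mul fun _ _ => hm.intervalIntegrable).continuousAt

theorem Monotone.exists_contDiff_majorant (hm : Monotone m) (h0 : Tendsto m (𝓝 0) (𝓝 0)) :
    ∃ h : ℝ → ℝ, ContDiff ℝ 1 h ∧ h 0 = 0 ∧ deriv h 0 = 0 ∧ ∀ r, 0 ≤ r → r * m r ≤ h r := by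
  have hp : Continuous (dyadicMean m) := hm.continuous_dyadicMean h0
  set P : ℝ → ℝ := fun r => ∫ t in 0..r, dyadicMean m t
  have hP : ∀ r, HasDerivAt P (dyadicMean m r) r := fun r =>
    (hp.integral_hasStrictDerivAt 0 r).hasDerivAt
  have hPc : ContDiff ℝ 1 P := contDiff_one_iff_deriv.2
    ⟨fun r => (hP r).differentiableAt, by rwa [funext fun r => (hP r).deriv]⟩
  refine ⟨fun r => P (2 * r) - P r, (hPc.comp (contDiff_const.mul contDiff_id)).sub hPc,
    by simp [P], ?_, fun r hr => ?_⟩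
  · have hd : HasDerivAt (fun r => P (2 * r) - P r)
        (dyadicMean m (2 * 0) * 2 - dyadicMean m 0) 0 :=
      ((hP (2 * 0)).comp 0 ((hasDerivAt_id 0).const_mul 2)).sub (hP 0) |>.congr_deriv (by ring)
    simpa [dyadicMean_eq] using hd.deriv
  · rcases hr.eq_or_lt with rfl | hr
    · simp
    have hPr : P (2 * r) - P r = ∫ t in r..2 * r, dyadicMean m t :=
      integral_interval_sub_left (hp.intervalIntegrable _ _) (hp.intervalIntegrable _ _)
    have hle : ∫ t in r..2 * r, m r ≤ ∫ t in r..2 * r, dyadicMean m t :=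
      integral_mono_on (by linarith) intervalIntegrable_const (hp.intervalIntegrable _ _)
        fun t ht => (hm ht.1).trans (hm.interval_average_mem_Icc (by linarith [ht.1])).1
    rw [intervalIntegral.integral_const, smul_eq_mul, show 2 * r - r = r by ring] at hle
    simpa only [hPr] using hle

end DyadicMean

section Radial

variable {E : Type*} [NormedAddCommGroup E] [InnerProductSpace ℝ E] {h : ℝ → ℝ}

theorem hasFDerivAt_comp_norm_zero (hh : HasDerivAt h 0 0) :
    HasFDerivAt (fun z : E => h ‖z‖) (0 : E →L[ℝ] ℝ) 0 := by
  have := (hasDerivAt_iff_isLittleO.1 hh).comp_tendsto (tendsto_norm_zero (E := E))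
  rw [hasFDerivAt_iff_isLittleO]
  refine IsLittleO.of_norm_right ?_
  simpa [Function.comp_def] using this

theorem ContDiff.comp_norm (hh : ContDiff ℝ 1 h) (h0 : deriv h 0 = 0) :
    ContDiff ℝ 1 (fun z : E => h ‖z‖) := by
  have hdiff : Differentiable ℝ h := hh.differentiable one_ne_zero
  have hF : ∀ z : E, z ≠ 0 → ContDiffAt ℝ 1 (fun z : E => h ‖z‖) z := fun z hz =>
    hh.contDiffAt.comp z (contDiffAt_norm ℝ hz)
  have hF0 : HasFDerivAt (fun z : E => h ‖z‖) (0 : E →L[ℝ] ℝ) 0 :=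
    hasFDerivAt_comp_norm_zero ((hdiff 0).hasDerivAt.congr_deriv h0)
  have hbound : ∀ z : E, ‖fderiv ℝ (fun z : E => h ‖z‖) z‖ ≤ |deriv h ‖z‖| := by
    intro z
    rcases eq_or_ne z 0 with rfl | hz
    · simp [hF0.fderiv]
    have hchain : HasFDerivAt (fun z : E => h ‖z‖)
        (deriv h ‖z‖ • fderiv ℝ (Norm.norm : E → ℝ) z) z :=
      (hdiff ‖z‖).hasDerivAt.comp_hasFDerivAt z
        ((contDiffAt_norm ℝ hz).differentiableAt one_ne_zero).hasFDerivAt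
    rw [hchain.fderiv, norm_smul, Real.norm_eq_abs]
    exact mul_le_of_le_one_right (abs_nonneg _)
      (by simpa using norm_fderiv_le_of_lipschitz ℝ (lipschitzWith_one_norm (E := E)))
  refine contDiff_one_iff_fderiv.2 ⟨fun z => ?_, continuous_iff_continuousAt.2 fun z => ?_⟩
  · rcases eq_or_ne z 0 with rfl | hz
    exacts [hF0.differentiableAt, (hF z hz).differentiableAt one_ne_zero]
  rcases eq_or_ne z 0 with rfl | hz
  · rw [ContinuousAt, hF0.fderiv]
    have hlim : Tendsto (fun z : E => |deriv h ‖z‖|) (𝓝 0) (𝓝 0) := by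
      simpa [h0] using ((hh.continuous_deriv le_rfl).tendsto 0).comp tendsto_norm_zero |>.abs
    exact squeeze_zero_norm hbound hlim
  · exact (hF z hz).continuousAt_fderiv one_ne_zero

end Radial

theorem Asymptotics.IsLittleO.exists_monotone_modulus {E : Type*} [SeminormedAddCommGroup E]
    {φ : E → ℝ} {x : E} (hφ : φ =o[𝓝 x] fun y => y - x) :
    ∃ m : ℝ → ℝ, Monotone m ∧ Tendsto m (𝓝 0) (𝓝 0) ∧
      ∀ᶠ y in 𝓝 x, |φ y| ≤ ‖y - x‖ * m ‖y - x‖ := by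
  set q : E → ℝ := fun y => min (|φ y| / ‖y - x‖) 1
  set m : ℝ → ℝ := fun s => sSup (q '' Metric.closedBall x s)
  have hq0 : ∀ y, 0 ≤ q y := fun y => le_min (by positivity) zero_le_one
  have hm0 : ∀ s, 0 ≤ m s := fun s => Real.sSup_nonneg (forall_mem_image.2 fun y _ => hq0 y)
  have hqm : ∀ y s, dist y x ≤ s → q y ≤ m s := fun y s hy =>
    le_csSup ⟨1, forall_mem_image.2 fun y _ => min_le_right _ _⟩ (mem_image_of_mem q hy)
  have hm_le : ∀ ε > 0, ∀ᶠ s in 𝓝 0, m s ≤ ε := by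
    intro ε hε
    obtain ⟨δ, hδ, hφδ⟩ := Metric.eventually_nhds_iff.1 (hφ.def hε)
    filter_upwards [Iio_mem_nhds hδ] with s hs
    refine Real.sSup_le (forall_mem_image.2 fun y hy => (min_le_left _ _).trans ?_) hε.le
    refine div_le_of_le_mul₀ (norm_nonneg _) hε.le ?_
    simpa [← dist_eq_norm] using hφδ (lt_of_le_of_lt (Metric.mem_closedBall.1 hy) hs)
  refine ⟨m, fun s t hst => Real.sSup_le (forall_mem_image.2 fun y hy => hqm y t
    ((Metric.mem_closedBall.1 hy).trans hst)) (hm0 t), ?_, ?_⟩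
  · exact tendsto_order.2 ⟨fun a ha => Eventually.of_forall fun s => ha.trans_le (hm0 s),
      fun a ha => (hm_le (a / 2) (by positivity)).mono fun s hs => by linarith⟩
  · filter_upwards [hφ.def one_pos] with y hy
    rw [Real.norm_eq_abs, one_mul] at hy
    have hq : q y = |φ y| / ‖y - x‖ := min_eq_left (div_le_one_of_le₀ hy (norm_nonneg _))
    rcases (norm_nonneg (y - x)).eq_or_lt with h0 | hpos
    · rw [← h0] at hy ⊢
      simpa using hy
    · calc |φ y| = ‖y - x‖ * q y := by rw [hq, mul_div_cancel₀ _ hpos.ne']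
        _ ≤ ‖y - x‖ * m ‖y - x‖ :=
          mul_le_mul_of_nonneg_left (hqm y _ (dist_eq_norm y x).le) hpos.le

theorem Asymptotics.IsLittleO.exists_contDiff_majorant {E : Type*} [NormedAddCommGroup E]
    [InnerProductSpace ℝ E] {φ : E → ℝ} {x : E} (hφ : φ =o[𝓝 x] fun y => y - x) :
    ∃ Φ : E → ℝ, ContDiff ℝ 1 Φ ∧ Φ x = 0 ∧ ∀ᶠ y in 𝓝 x, |φ y| ≤ Φ y := by
  obtain ⟨m, hm, hm0, hφm⟩ := hφ.exists_monotone_modulus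
  obtain ⟨h, hh, hh0, hdh0, hmh⟩ := hm.exists_contDiff_majorant hm0
  exact ⟨fun y => h ‖y - x‖, (hh.comp_norm hdh0).comp (contDiff_id.sub contDiff_const),
    by simp [hh0], hφm.mono fun y hy => hy.trans (hmh _ (norm_nonneg _))⟩

section Squeeze

variable {E : Type*} [NormedAddCommGroup E] [NormedSpace ℝ E] {f g w : E → ℝ} {L L' : E →L[ℝ] ℝ}
  {x : E}

theorem HasFDerivAt.eq_of_eventually_le (hf : HasFDerivAt f L x) (hg : HasFDerivAt g L' x)
    (hfg : f x = g x) (hle : ∀ᶠ y in 𝓝 x, g y ≤ f y) : L = L' := by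
  have hmin : IsLocalMin (fun y => f y - g y) x :=
    hle.mono fun y hy => by simpa [hfg] using hy
  exact sub_eq_zero.1 (hmin.hasFDerivAt_eq_zero (hf.sub hg))

theorem hasFDerivAt_of_squeeze (hf : HasFDerivAt f L x) (hg : HasFDerivAt g L x)
    (hfg : f x = g x) (hgw : ∀ᶠ y in 𝓝 x, g y ≤ w y) (hwf : ∀ᶠ y in 𝓝 x, w y ≤ f y) :
    HasFDerivAt w L x := by
  have hwx : w x = f x := le_antisymm hwf.self_of_nhds (hfg ▸ hgw.self_of_nhds)
  refine .of_isLittleO <| IsBigO.trans_isLittleO (.of_bound' ?_)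
    (hf.isLittleO.norm_left.add hg.isLittleO.norm_left)
  filter_upwards [hgw, hwf] with y hgy hwy
  simp only [Real.norm_eq_abs]
  rw [hwx, ← hfg]
  refine (abs_le.2 ⟨?_, ?_⟩).trans (le_abs_self _)
  · linarith [neg_abs_le (g y - f x - L (y - x)), abs_nonneg (f y - f x - L (y - x))]
  · linarith [le_abs_self (f y - f x - L (y - x)), abs_nonneg (g y - f x - L (y - x))]

end Squeeze

theorem stmt0 {n : ℕ} (w : EuclideanSpace ℝ (Fin n) → ℝ) (x : EuclideanSpace ℝ (Fin n)) :
    DifferentiableAt ℝ w x ↔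
      ∃ f g : EuclideanSpace ℝ (Fin n) → ℝ, ContDiff ℝ 1 f ∧ ContDiff ℝ 1 g ∧
        f x = g x ∧ ∀ᶠ y in 𝓝 x, g y ≤ w y ∧ w y ≤ f y := by
  constructor
  · intro hw
    set L := fderiv ℝ w x
    obtain ⟨Φ, hΦ, hΦx, hΦw⟩ := hw.hasFDerivAt.isLittleO.exists_contDiff_majorant
    refine ⟨fun y => w x + L (y - x) + Φ y, fun y => w x + L (y - x) - Φ y, by fun_prop,
      by fun_prop, by simp [hΦx], hΦw.mono fun y hy => ?_⟩
    constructor <;> linarith [abs_le.1 hy]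
  · rintro ⟨f, g, hf, hg, hfg, hgwf⟩
    have hf' := (hf.differentiable one_ne_zero x).hasFDerivAt
    have hg' := (hg.differentiable one_ne_zero x).hasFDerivAt
    have hL := hf'.eq_of_eventually_le hg' hfg (hgwf.mono fun y hy => hy.1.trans hy.2)
    exact (hasFDerivAt_of_squeeze hf' (hL ▸ hg') hfg (hgwf.mono fun _ => And.left)
      (hgwf.mono fun _ => And.right)).differentiableAt
end

section
/- Let w : ℝⁿ → ℝ be a function that is differentiable almost everywhere (with respect to Lebesgue measure). Let A = w⁻¹({0}) and B = {x : w is differentiable at x and ∇w(x) ≠ 0}. Then the Lebesgue measure of A ∩ B is zero. -/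
/-!
Almost every point of a set is a Lebesgue density point of it. At a density point `x` of `s`,
every direction is a limit of rescaled directions `(y - x) / r` with `y ∈ s`, so the tangent cone
of `s` at `x` is the whole space and derivatives within `s` at `x` are unique. If `w` is constant
on `s`, its derivative within `s` is therefore `0`, so `fderiv w x = 0` at every density point of
`s` where `w` is differentiable. Taking for `s` the set `t` of zeros of `w` where `∇w ≠ 0` itself,
no point of `t` is a density point of `t`, while almost every point of `t` is; hence `t` is null.
-/

open MeasureTheory Metric Set Filter Topology Pointwise

section Density

variable {E : Type*} [NormedAddCommGroup E] [NormedSpace ℝ E] [FiniteDimensional ℝ E]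
  [MeasurableSpace E] [BorelSpace E] (μ : Measure E) [μ.IsAddHaarMeasure]

theorem tangentConeAt_eq_univ_of_tendsto_density_one {s : Set E} {x : E}
    (h : Tendsto (fun r => μ (s ∩ closedBall x r) / μ (closedBall x r)) (𝓝[>] 0) (𝓝 1)) :
    tangentConeAt ℝ s x = univ := by
  refine eq_univ_of_forall fun y => ?_
  simp only [tangentConeAt_eq_biInter_closure, mem_iInter₂, Metric.mem_closure_iff]
  intro U hU ε hε
  have hmeets := μ.eventually_nonempty_inter_smul_of_density_one s x h (closedBall y (ε / 2))
    measurableSet_closedBall (measure_closedBall_pos μ y (half_pos hε)).ne'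
  have hsmall : ∀ᶠ r in 𝓝[>] (0 : ℝ), {0} + r • closedBall y (ε / 2) ⊆ U :=
    nhdsWithin_le_nhds (eventually_singleton_add_smul_subset isBounded_closedBall hU)
  obtain ⟨r, ⟨z, hzs, hz⟩, hrU, hr⟩ := (hmeets.and (hsmall.and self_mem_nhdsWithin)).exists
  obtain ⟨a, ha, rfl⟩ : ∃ a ∈ closedBall y (ε / 2), x + r • a = z := by
    simp only [singleton_add, image_add_left, mem_preimage, mem_smul_set] at hz
    obtain ⟨a, ha, hax⟩ := hz
    exact ⟨a, ha, by rw [hax, add_neg_cancel_left]⟩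
  refine ⟨a, ⟨r⁻¹, mem_univ _, r • a, ⟨hrU ?_, hzs⟩, inv_smul_smul₀ (ne_of_gt hr) a⟩, ?_⟩
  · simpa using smul_mem_smul_set ha
  · linarith [mem_closedBall'.1 ha]

theorem uniqueDiffWithinAt_of_tendsto_density_one {s : Set E} {x : E} (hx : x ∈ s)
    (h : Tendsto (fun r => μ (s ∩ closedBall x r) / μ (closedBall x r)) (𝓝[>] 0) (𝓝 1)) :
    UniqueDiffWithinAt ℝ s x where
  dense_tangentConeAt := by
    simp [tangentConeAt_eq_univ_of_tendsto_density_one μ h]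
  mem_closure := subset_closure hx

variable {F : Type*} [NormedAddCommGroup F] [NormedSpace ℝ F]

theorem addHaar_inter_setOf_fderiv_ne_zero_eq_zero {w : E → F} {s : Set E} {c : F}
    (hs : s ⊆ w ⁻¹' {c}) :
    μ (s ∩ {x | DifferentiableAt ℝ w x ∧ fderiv ℝ w x ≠ 0}) = 0 := by
  set t := s ∩ {x | DifferentiableAt ℝ w x ∧ fderiv ℝ w x ≠ 0}
  rw [← Measure.restrict_apply_self, measure_eq_zero_iff_ae_notMem]
  filter_upwards [Besicovitch.ae_tendsto_measure_inter_div μ t] with x hx hxt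
  have hconst : HasFDerivWithinAt w (0 : E →L[ℝ] F) t x :=
    (hasFDerivWithinAt_const c x t).congr (fun y hy => hs hy.1) (hs hxt.1)
  exact hxt.2.2 ((uniqueDiffWithinAt_of_tendsto_density_one μ hxt hx).eq
    hxt.2.1.hasFDerivAt.hasFDerivWithinAt hconst)

end Density

theorem stmt2_general {n : ℕ} (w : EuclideanSpace ℝ (Fin n) → ℝ) :
    volume (w ⁻¹' {0} ∩ {x | DifferentiableAt ℝ w x ∧ fderiv ℝ w x ≠ 0}) = 0 :=
  addHaar_inter_setOf_fderiv_ne_zero_eq_zero volume subset_rfl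

theorem stmt2 {n : ℕ} (w : EuclideanSpace ℝ (Fin n) → ℝ)
    (hw : ∀ᵐ x ∂(volume : Measure (EuclideanSpace ℝ (Fin n))), DifferentiableAt ℝ w x) :
    volume (w ⁻¹' {0} ∩ {x | DifferentiableAt ℝ w x ∧ fderiv ℝ w x ≠ 0}) = 0 :=
  stmt2_general w
end

section
/- Let H and E be Hilbert spaces, g : H → E a continuous linear map, and B a nonempty bounded subset of E such that for every a ∈ H there exists b_a ∈ B with ⟨b_a, g(a)⟩ ≥ 0. Then there exists b in the closed convex hull of B such that ⟨b, g(a)⟩ = 0 for all a ∈ H. -/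
/-!
With `T := g†` we have `⟪b, g a⟫ = ⟪a, T b⟫`, so we need `0 ∈ T '' K` for `K` the closed convex hull
of `B`. As `K` is closed, bounded and convex, `T '' K` is closed: this is the weak compactness of `K`,
which we replace by the fact that the points of minimal norm of a decreasing sequence of such sets form
a Cauchy sequence. If `0 ∉ T '' K`, a separating functional `⟪a, ·⟫` makes `⟪b, g a⟫` positive on `B`,
contradicting the hypothesis at `-a`.
-/

open Bornology Filter

lemma cauchySeq_of_dist_sq_le_sub {X : Type*} [PseudoMetricSpace X] {p : ℕ → X} {a : ℕ → ℝ}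
    (hbdd : BddAbove (Set.range a)) (h : ∀ m n, m ≤ n → dist (p m) (p n) ^ 2 ≤ a n - a m) :
    CauchySeq p := by
  have hmono : Monotone a := fun m n hmn => by
    linarith [h m n hmn, sq_nonneg (dist (p m) (p n))]
  refine cauchySeq_of_le_tendsto_0' (fun n => √((⨆ k, a k) - a n)) (fun m n hmn => ?_) ?_
  · exact Real.le_sqrt_of_sq_le ((h m n hmn).trans (by linarith [le_ciSup hbdd n]))
  · simpa using ((tendsto_atTop_ciSup hmono hbdd).const_sub (⨆ k, a k)).sqrt

section Hilbert

variable {F : Type*} [NormedAddCommGroup F] [InnerProductSpace ℝ F] [CompleteSpace F]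

/-- `v` is the point of minimal norm of `C`. -/
lemma IsClosed.exists_mem_forall_norm_sub_sq_le {C : Set F} (hne : C.Nonempty)
    (hcl : IsClosed C) (hcv : Convex ℝ C) :
    ∃ v ∈ C, ∀ w ∈ C, ‖w - v‖ ^ 2 ≤ ‖w‖ ^ 2 - ‖v‖ ^ 2 := by
  obtain ⟨v, hv, hmin⟩ := exists_norm_eq_iInf_of_complete_convex hne hcl.isComplete hcv 0
  refine ⟨v, hv, fun w hw => ?_⟩
  have hangle := (norm_eq_iInf_iff_real_inner_le_zero hcv hv).1 hmin w hw
  rw [zero_sub, inner_neg_left, inner_sub_right, real_inner_self_eq_norm_sq] at hangle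
  rw [norm_sub_sq_real, real_inner_comm]
  linarith

lemma nonempty_iInter_of_antitone_of_convex {C : ℕ → Set F} (hanti : Antitone C)
    (hne : ∀ n, (C n).Nonempty) (hcl : ∀ n, IsClosed (C n)) (hcv : ∀ n, Convex ℝ (C n))
    (hbd : IsBounded (C 0)) :
    (⋂ n, C n).Nonempty := by
  choose p hp hpyth using fun n => (hcl n).exists_mem_forall_norm_sub_sq_le (hne n) (hcv n)
  have hmem : ∀ m n, m ≤ n → p n ∈ C m := fun m n hmn => hanti hmn (hp n)
  obtain ⟨M, hM⟩ := hbd.exists_norm_le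
  have hbdd : BddAbove (Set.range fun n => ‖p n‖ ^ 2) := by
    refine ⟨M ^ 2, Set.forall_mem_range.2 fun n => ?_⟩
    exact pow_le_pow_left₀ (norm_nonneg _) (hM _ (hmem 0 n n.zero_le)) 2
  have hcauchy : CauchySeq p := cauchySeq_of_dist_sq_le_sub hbdd fun m n hmn => by
    rw [dist_comm, dist_eq_norm]
    exact hpyth m (p n) (hmem m n hmn)
  obtain ⟨q, hq⟩ := cauchySeq_tendsto_of_complete hcauchy
  exact ⟨q, Set.mem_iInter.2 fun m =>
    (hcl m).mem_of_tendsto hq (eventually_atTop.2 ⟨m, hmem m⟩)⟩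

lemma ContinuousLinearMap.isClosed_image_of_isBounded_of_convex {G : Type*} [NormedAddCommGroup G]
    [NormedSpace ℝ G] (T : F →L[ℝ] G) {K : Set F} (hcl : IsClosed K) (hbd : IsBounded K)
    (hcv : Convex ℝ K) :
    IsClosed (T '' K) := by
  refine closure_subset_iff_isClosed.1 fun y hy => ?_
  let C : ℕ → Set F := fun n => K ∩ T ⁻¹' Metric.closedBall y (1 / (n + 1))
  have hanti : Antitone C := fun m n hmn =>
    Set.inter_subset_inter_right _ <| Set.preimage_mono <|
      Metric.closedBall_subset_closedBall <| Nat.one_div_le_one_div hmn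
  have hne : ∀ n, (C n).Nonempty := fun n => by
    obtain ⟨_, ⟨x, hx, rfl⟩, hdist⟩ :=
      Metric.mem_closure_iff.1 hy (1 / (n + 1)) Nat.one_div_pos_of_nat
    exact ⟨x, hx, by rw [Set.mem_preimage, Metric.mem_closedBall, dist_comm]; exact hdist.le⟩
  obtain ⟨x, hx⟩ := nonempty_iInter_of_antitone_of_convex hanti hne
    (fun n => hcl.inter (Metric.isClosed_closedBall.preimage T.continuous))
    (fun n => hcv.inter ((convex_closedBall y _).linear_preimage T.toLinearMap))
    (hbd.subset Set.inter_subset_left)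
  rw [Set.mem_iInter] at hx
  refine ⟨x, (hx 0).1, dist_le_zero.1 (le_of_forall_gt_imp_ge_of_dense fun ε hε => ?_)⟩
  obtain ⟨n, hn⟩ := exists_nat_one_div_lt hε
  exact (hx n).2.trans hn.le

end Hilbert

theorem stmt5_general {H E : Type*} [NormedAddCommGroup H] [InnerProductSpace ℝ H] [CompleteSpace H]
    [NormedAddCommGroup E] [InnerProductSpace ℝ E] [CompleteSpace E]
    (g : H →L[ℝ] E) (B : Set E) (hbd : Bornology.IsBounded B)
    (hpos : ∀ a : H, ∃ b ∈ B, 0 ≤ (inner ℝ b (g a) : ℝ)) :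
    ∃ b ∈ closure (convexHull ℝ B), ∀ a : H, (inner ℝ b (g a) : ℝ) = 0 := by
  set K := closure (convexHull ℝ B)
  have hcv : Convex ℝ K := (convex_convexHull ℝ B).closure
  have hclosed : IsClosed ((ContinuousLinearMap.adjoint g) '' K) :=
    (ContinuousLinearMap.adjoint g).isClosed_image_of_isBounded_of_convex isClosed_closure
      (isBounded_convexHull.2 hbd).closure hcv
  by_cases h0 : (0 : H) ∈ (ContinuousLinearMap.adjoint g) '' K
  · obtain ⟨b, hb, hb0⟩ := h0
    refine ⟨b, hb, fun a => ?_⟩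
    rw [← ContinuousLinearMap.adjoint_inner_left, hb0, inner_zero_left]
  · obtain ⟨f, u, hf0, hfK⟩ := geometric_hahn_banach_point_closed
      (hcv.linear_image (ContinuousLinearMap.adjoint g).toLinearMap) hclosed h0
    set a := (InnerProductSpace.toDual ℝ H).symm f
    obtain ⟨b, hb, hba⟩ := hpos (-a)
    have hsep := hfK _ ⟨b, subset_closure (subset_convexHull ℝ B hb), rfl⟩
    rw [← InnerProductSpace.toDual_symm_apply, ContinuousLinearMap.coe_coe,
      ContinuousLinearMap.adjoint_inner_right, real_inner_comm] at hsep
    rw [map_neg, inner_neg_right] at hba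
    linarith [f.map_zero]

theorem stmt5 {H E : Type*} [NormedAddCommGroup H] [InnerProductSpace ℝ H] [CompleteSpace H]
    [NormedAddCommGroup E] [InnerProductSpace ℝ E] [CompleteSpace E]
    (g : H →L[ℝ] E) (B : Set E) (hne : B.Nonempty) (hbd : Bornology.IsBounded B)
    (hpos : ∀ a : H, ∃ b ∈ B, 0 ≤ (inner ℝ b (g a) : ℝ)) :
    ∃ b ∈ closure (convexHull ℝ B), ∀ a : H, (inner ℝ b (g a) : ℝ) = 0 :=
  stmt5_general g B hbd hpos
end

section
/- Let S ⊂ ℝⁿ be a set with ℋⁿ⁻¹(∂S) < ∞, let X be a Lipschitz vector field with Lipschitz flow φ_t, and suppose Lip(φ_s) ≤ 2 for |s| ≤ s₀. Then for 0 ≤ t ≤ s₀, the symmetric difference Δ(φ_t(S), S) is contained in ⋃_{0 ≤ s ≤ t} φ_s(∂S), and consequently μ(Δ(φ_t(S), S)) ≤ t · max(2, M)ⁿ · ℋⁿ⁻¹(∂S), where M is a Lipschitz bound of (t, x) ↦ φ_t(x). -/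
open MeasureTheory ENNReal

/-!
An orbit `s ↦ φ s x` that starts in `S` and is outside `S` at time `t` (or the same, run backwards)
meets `frontier S` at some time in `[0, t]`, by connectedness of the interval. Hence the symmetric
difference lies in the image of `[0, t] × ∂S` under the `M`-Lipschitz map `(s, x) ↦ φ s x`, whose
`(m+1)`-dimensional Hausdorff measure is at most `M ^ (m+1) · t · ℋᵐ(∂S)`. The product bound
`ℋᵐ⁺¹([0, t] × A) ≤ t · ℋᵐ(A)` comes from cutting each strip `[0, t] × C` of a near-optimal cover
of `A` into about `t / diam C` pieces of diameter `diam C`, and Lebesgue measure on Euclidean space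
is dominated by `ℋᵐ⁺¹`.
-/

open Set Metric Filter Topology

theorem IsPreconnected.inter_frontier_nonempty {α : Type*} [TopologicalSpace α] {s t : Set α}
    (hs : IsPreconnected s) (hst : (s ∩ t).Nonempty) (hst' : (s \ t).Nonempty) :
    (s ∩ frontier t).Nonempty := by
  by_contra! h
  have hsub : s ⊆ interior t ∪ (closure t)ᶜ := fun x hx => by
    by_cases hc : x ∈ closure t
    · exact .inl (not_not.1 fun hi => h.subset ⟨hx, hc, hi⟩)
    · exact .inr hc
  obtain ⟨x, hxs, hxt⟩ := hst
  obtain ⟨y, hys, hyt⟩ := hst'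
  obtain ⟨z, -, hzi, hzc⟩ := hs _ _ isOpen_interior isClosed_closure.isOpen_compl hsub
    ⟨x, hxs, (hsub hxs).resolve_right (not_not.2 (subset_closure hxt))⟩
    ⟨y, hys, (hsub hys).resolve_left fun hi => hyt (interior_subset hi)⟩
  exact hzc (subset_closure (interior_subset hzi))

theorem symmDiff_image_subset_iUnion_image_frontier {E : Type*} [TopologicalSpace E]
    {φ : ℝ → E → E} (h0 : ∀ x, φ 0 x = x) (hadd : ∀ s r x, φ (s + r) x = φ s (φ r x))
    (hcont : ∀ x, Continuous fun s => φ s x) (S : Set E) {t : ℝ} (ht : 0 ≤ t) :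
    symmDiff (φ t '' S) S ⊆ ⋃ s ∈ Icc 0 t, φ s '' frontier S := by
  have hinv : ∀ s x, φ s (φ (-s) x) = x := fun s x => by rw [← hadd, add_neg_cancel, h0]
  have hcross : ∀ {γ : ℝ → E}, Continuous γ → γ 0 ∈ S → γ t ∉ S →
      ∃ s ∈ Icc 0 t, γ s ∈ frontier S := fun {γ} hγ h0S htS => by
    obtain ⟨_, ⟨s, hs, rfl⟩, hfr⟩ :=
      (isPreconnected_Icc.image γ hγ.continuousOn).inter_frontier_nonempty
        ⟨γ 0, mem_image_of_mem γ (left_mem_Icc.2 ht), h0S⟩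
        ⟨γ t, mem_image_of_mem γ (right_mem_Icc.2 ht), htS⟩
    exact ⟨s, hs, hfr⟩
  rintro y (⟨⟨x, hxS, rfl⟩, hyS⟩ | ⟨hyS, hy⟩)
  · obtain ⟨s, hs, hfr⟩ := hcross (hcont x) (by rwa [h0]) hyS
    refine mem_iUnion₂.2 ⟨t - s, ⟨by linarith [hs.2], by linarith [hs.1]⟩, φ s x, hfr, ?_⟩
    rw [← hadd, sub_add_cancel]
  · obtain ⟨s, hs, hfr⟩ := hcross ((hcont y).comp continuous_neg) (by simpa [h0] using hyS)
      fun h => hy ⟨_, h, hinv t y⟩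
    exact mem_iUnion₂.2 ⟨s, hs, _, hfr, hinv s y⟩

theorem Metric.ediam_prod_le {α β : Type*} [PseudoEMetricSpace α] [PseudoEMetricSpace β]
    (s : Set α) (u : Set β) : ediam (s ×ˢ u) ≤ max (ediam s) (ediam u) :=
  ediam_le fun p hp q hq => (Prod.edist_eq p q).trans_le <|
    max_le_max (edist_le_ediam_of_mem hp.1 hq.1) (edist_le_ediam_of_mem hp.2 hq.2)

/-- Positive lower bounds `δ n` for the side lengths of a cover, whose price in the `m`-dimensional
sum is at most `∑ ε n`; for `m = 0` there is no price, as `x ^ 0 = 1`. -/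
theorem exists_pos_seq_rpow_max_le_add {m θ : ℝ} (hm : 0 ≤ m) (hθ : 0 < θ) {η : ℝ≥0∞}
    (hη : η ≠ 0) : ∃ δ : ℕ → ℝ, ∃ ε : ℕ → ℝ≥0∞, (∀ n, 0 < δ n ∧ δ n ≤ θ) ∧
      ∑' n, ε n ≤ η ∧ ∀ n (a : ℝ≥0∞), max a (ENNReal.ofReal (δ n)) ^ m ≤ a ^ m + ε n := by
  rcases hm.eq_or_lt with rfl | hm
  · exact ⟨fun _ => θ, 0, fun _ => ⟨hθ, le_rfl⟩, by simp, fun _ _ => by simp⟩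
  obtain ⟨ε, hεpos, hεsum⟩ := ENNReal.exists_pos_sum_of_countable hη ℕ
  refine ⟨fun n => min θ ((ε n : ℝ) ^ m⁻¹), fun n => ε n, fun n => ⟨?_, min_le_left _ _⟩,
    hεsum.le, fun n a => ?_⟩
  · exact lt_min hθ (Real.rpow_pos_of_pos (NNReal.coe_pos.2 (hεpos n)) _)
  have hδ : ENNReal.ofReal (min θ ((ε n : ℝ) ^ m⁻¹)) ^ m ≤ ε n := calc
    _ ≤ ENNReal.ofReal ((ε n : ℝ) ^ m⁻¹) ^ m := by gcongr; exact min_le_right _ _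
    _ = ε n := by
      rw [ENNReal.ofReal_rpow_of_nonneg (by positivity) hm.le,
        Real.rpow_inv_rpow (NNReal.coe_nonneg _) hm.ne', ofReal_coe_nnreal]
  calc max a _ ^ m = max (a ^ m) (ENNReal.ofReal (min θ ((ε n : ℝ) ^ m⁻¹)) ^ m) :=
        (ENNReal.monotone_rpow_of_nonneg hm.le).map_max
    _ ≤ a ^ m + ε n := max_le le_self_add (hδ.trans le_add_self)

theorem exists_cover_Icc_prod {X : Type*} [PseudoEMetricSpace X] (B : Set X) {t ℓ k : ℝ}
    (ht : 0 ≤ t) (hℓ : 0 < ℓ) (hk : 0 ≤ k) (hB : ediam B ≤ ENNReal.ofReal ℓ) :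
    ∃ T : ℕ → Set (ℝ × X), Icc 0 t ×ˢ B ⊆ ⋃ j, T j ∧ (∀ j, ediam (T j) ≤ ENNReal.ofReal ℓ) ∧
      ∑' j, ediam (T j) ^ (k + 1) ≤
        ⨆ _ : B.Nonempty, ENNReal.ofReal (t + ℓ) * ENNReal.ofReal ℓ ^ k := by
  have hk1 : 0 < k + 1 := by linarith
  rcases B.eq_empty_or_nonempty with rfl | hne
  · exact ⟨fun _ => ∅, by simp, by simp, by simp [hk1]⟩
  set N := ⌊t / ℓ⌋₊ + 1
  set T : ℕ → Set (ℝ × X) := fun j => if j < N then Icc (j * ℓ) ((j + 1) * ℓ) ×ˢ B else ∅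
    with hT
  have hdiam : ∀ j, ediam (T j) ≤ ENNReal.ofReal ℓ := fun j => by
    simp only [hT]
    split_ifs
    · refine (ediam_prod_le _ _).trans (max_le ?_ hB)
      rw [Real.ediam_Icc]; ring_nf; exact le_rfl
    · simp
  refine ⟨T, ?_, hdiam, ?_⟩
  · rintro ⟨s, x⟩ ⟨hs, hx⟩
    have hsℓ : s / ℓ * ℓ = s := div_mul_cancel₀ s hℓ.ne'
    have hj : ⌊s / ℓ⌋₊ < N := Nat.lt_succ_of_le (Nat.floor_le_floor (by gcongr; exact hs.2))
    refine mem_iUnion.2 ⟨⌊s / ℓ⌋₊, ?_⟩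
    simp only [hT, hj, if_true]
    refine ⟨⟨?_, ?_⟩, hx⟩
    · nlinarith [Nat.floor_le (div_nonneg hs.1 hℓ.le)]
    · nlinarith [Nat.lt_floor_add_one (s / ℓ)]
  have hNℓ : (N : ℝ) * ℓ ≤ t + ℓ := by
    have hfloor := Nat.floor_le (div_nonneg ht hℓ.le)
    have htℓ : t / ℓ * ℓ = t := div_mul_cancel₀ t hℓ.ne'
    simp only [N]; push_cast; nlinarith
  calc ∑' j, ediam (T j) ^ (k + 1) = ∑ j ∈ Finset.range N, ediam (T j) ^ (k + 1) :=
        tsum_eq_sum fun j hj => by simp [hT, Finset.mem_range.not.1 hj, hk1]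
    _ ≤ ∑ j ∈ Finset.range N, ENNReal.ofReal ℓ ^ (k + 1) :=
        Finset.sum_le_sum fun j _ => rpow_le_rpow (hdiam j) hk1.le
    _ = ENNReal.ofReal (N * ℓ) * ENNReal.ofReal ℓ ^ k := by
        rw [Finset.sum_const, Finset.card_range, nsmul_eq_mul, ENNReal.ofReal_mul (by positivity),
          ofReal_natCast, rpow_add _ _ (by simpa using hℓ) ofReal_ne_top, rpow_one]
        ring
    _ ≤ ⨆ _ : B.Nonempty, ENNReal.ofReal (t + ℓ) * ENNReal.ofReal ℓ ^ k := by
        rw [ciSup_pos hne]; gcongr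

section HausdorffMeasure

variable {X : Type*} [EMetricSpace X] [MeasurableSpace X] [BorelSpace X]

theorem exists_cover_tsum_lt_of_hausdorffMeasure_lt {d : ℝ} {A : Set X} {c : ℝ≥0∞}
    (hc : μH[d] A < c) {r : ℝ≥0∞} (hr : 0 < r) :
    ∃ C : ℕ → Set X, A ⊆ ⋃ n, C n ∧ (∀ n, ediam (C n) ≤ r) ∧
      ∑' n, ⨆ _ : (C n).Nonempty, ediam (C n) ^ d < c := by
  rw [Measure.hausdorffMeasure_apply] at hc
  simpa only [iInf_lt_iff, exists_prop] using (le_iSup₂_of_le r hr le_rfl).trans_lt hc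

theorem hausdorffMeasure_le_of_forall_cover {d : ℝ} {s : Set X} {c : ℝ≥0∞} {ι : Type*}
    [Countable ι] (h : ∀ r : ℝ≥0∞, 0 < r → ∃ T : ι → Set X, s ⊆ ⋃ i, T i ∧
      (∀ i, ediam (T i) ≤ r) ∧ ∑' i, ediam (T i) ^ d ≤ c) :
    μH[d] s ≤ c := by
  choose T hcov hdiam hsum using fun n : ℕ => h (n : ℝ≥0∞)⁻¹ (ENNReal.inv_pos.2 (natCast_ne_top n))
  exact (Measure.hausdorffMeasure_le_liminf_tsum d s _ ENNReal.tendsto_inv_nat_nhds_zero T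
    (.of_forall hdiam) (.of_forall hcov)).trans
    (liminf_le_of_frequently_le' (.of_forall hsum))

theorem hausdorffMeasure_Icc_prod_le_add {m t η : ℝ} (hm : 0 ≤ m) (ht : 0 ≤ t) (hη : 0 < η)
    {A : Set X} (hA : μH[m] A ≠ ∞) :
    μH[m + 1] (Icc 0 t ×ˢ A) ≤ ENNReal.ofReal (t + η) * (μH[m] A + 2 * ENNReal.ofReal η) := by
  refine hausdorffMeasure_le_of_forall_cover (ι := ℕ × ℕ) fun r hr => ?_
  obtain ⟨q, -, hq0, hqr⟩ := ENNReal.lt_iff_exists_real_btwn.1 hr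
  set θ := min q η
  have hθ : 0 < θ := lt_min (ofReal_pos.1 hq0) hη
  have hθr : ENNReal.ofReal θ ≤ r := (ofReal_le_ofReal (min_le_left _ _)).trans hqr.le
  have hη0 : ENNReal.ofReal η ≠ 0 := (ofReal_pos.2 hη).ne'
  obtain ⟨C, hCcov, hCdiam, hCsum⟩ :=
    exists_cover_tsum_lt_of_hausdorffMeasure_lt (ENNReal.lt_add_right hA hη0) (ofReal_pos.2 hθ)
  obtain ⟨δ, ε, hδ, hεsum, hmax⟩ := exists_pos_seq_rpow_max_le_add hm hθ hη0
  -- `ℓ n > 0` even when `C n` is a point, so each strip `[0, t] × C n` needs finitely many pieces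
  set ℓ : ℕ → ℝ := fun n => max (ediam (C n)).toReal (δ n)
  have hℓ : ∀ n, ENNReal.ofReal (ℓ n) = max (ediam (C n)) (ENNReal.ofReal (δ n)) := fun n => by
    rw [ENNReal.ofReal_max, ofReal_toReal (ne_top_of_le_ne_top ofReal_ne_top (hCdiam n))]
  have hℓθ : ∀ n, ℓ n ≤ θ := fun n =>
    max_le (toReal_le_of_le_ofReal hθ.le (hCdiam n)) (hδ n).2
  choose T hTcov hTdiam hTsum using fun n => exists_cover_Icc_prod (C n) ht
    (lt_max_of_lt_right (hδ n).1) hm ((hℓ n).symm ▸ le_max_left _ _)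
  refine ⟨fun p => T p.1 p.2, ?_,
    fun p => (hTdiam _ _).trans ((ofReal_le_ofReal (hℓθ _)).trans hθr), ?_⟩
  · rintro ⟨s, x⟩ ⟨hs, hx⟩
    obtain ⟨n, hn⟩ := mem_iUnion.1 (hCcov hx)
    obtain ⟨j, hj⟩ := mem_iUnion.1 (hTcov n ⟨hs, hn⟩)
    exact mem_iUnion.2 ⟨(n, j), hj⟩
  have hstrip : ∀ n, ∑' j, ediam (T n j) ^ (m + 1) ≤
      ENNReal.ofReal (t + η) * ((⨆ _ : (C n).Nonempty, ediam (C n) ^ m) + ε n) := fun n =>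
    (hTsum n).trans <| iSup_le fun hne => by
      rw [ciSup_pos hne, hℓ n]
      gcongr
      · exact (hℓθ n).trans (min_le_right _ _)
      · exact hmax n _
  calc ∑' p : ℕ × ℕ, ediam (T p.1 p.2) ^ (m + 1) = ∑' n, ∑' j, ediam (T n j) ^ (m + 1) :=
        ENNReal.tsum_prod (f := fun n j => ediam (T n j) ^ (m + 1))
    _ ≤ ∑' n, ENNReal.ofReal (t + η) * ((⨆ _ : (C n).Nonempty, ediam (C n) ^ m) + ε n) :=
        ENNReal.tsum_le_tsum hstrip
    _ = ENNReal.ofReal (t + η) * ((∑' n, ⨆ _ : (C n).Nonempty, ediam (C n) ^ m) + ∑' n, ε n) := by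
        rw [ENNReal.tsum_mul_left, ENNReal.tsum_add]
    _ ≤ ENNReal.ofReal (t + η) * (μH[m] A + ENNReal.ofReal η + ENNReal.ofReal η) := by
        gcongr
    _ = ENNReal.ofReal (t + η) * (μH[m] A + 2 * ENNReal.ofReal η) := by ring

theorem hausdorffMeasure_Icc_prod_le {m t : ℝ} (hm : 0 ≤ m) (ht : 0 ≤ t) {A : Set X}
    (hA : μH[m] A ≠ ∞) : μH[m + 1] (Icc 0 t ×ˢ A) ≤ ENNReal.ofReal t * μH[m] A := by
  have hlen : Tendsto (fun η => ENNReal.ofReal (t + η)) (𝓝 0) (𝓝 (ENNReal.ofReal t)) :=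
    ENNReal.tendsto_ofReal (by simpa using (continuous_const_add t).tendsto 0)
  have hmeas : Tendsto (fun η => μH[m] A + 2 * ENNReal.ofReal η) (𝓝 0) (𝓝 (μH[m] A)) := by
    have h2 : Tendsto (fun η => 2 * ENNReal.ofReal η) (𝓝 0) (𝓝 (2 * ENNReal.ofReal 0)) :=
      ENNReal.Tendsto.const_mul (ENNReal.tendsto_ofReal tendsto_id) (Or.inr ofNat_ne_top)
    simpa using tendsto_const_nhds.add h2
  exact ge_of_tendsto
    ((ENNReal.Tendsto.mul hlen (Or.inr hA) hmeas (Or.inr ofReal_ne_top)).mono_left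
      nhdsWithin_le_nhds)
    (eventually_nhdsWithin_of_forall (s := Ioi 0) fun η hη =>
      hausdorffMeasure_Icc_prod_le_add hm ht hη hA)

end HausdorffMeasure

theorem EuclideanSpace.volume_le_hausdorffMeasure (ι : Type*) [Fintype ι]
    (s : Set (EuclideanSpace ℝ ι)) : volume s ≤ μH[Fintype.card ι] s := by
  have hvol : volume s = volume (WithLp.ofLp '' s) := by
    rw [← (EuclideanSpace.volume_preserving_symm_measurableEquiv_toLp ι).symm.measure_preimage_equiv
      s]
    congr 1; ext x
    exact ⟨fun h => ⟨_, h, rfl⟩, by rintro ⟨y, hy, rfl⟩; exact hy⟩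
  calc volume s = μH[Fintype.card ι] (WithLp.ofLp '' s) := by rw [hvol, hausdorffMeasure_pi_real]
    _ ≤ (1 : NNReal) ^ (Fintype.card ι : ℝ) * μH[Fintype.card ι] s :=
      (PiLp.lipschitzWith_ofLp 2 _).hausdorffMeasure_image_le (Nat.cast_nonneg _) s
    _ = μH[Fintype.card ι] s := by simp

theorem stmt11_general {m : ℕ} (S : Set (EuclideanSpace ℝ (Fin (m + 1))))
    (hS : μH[(m : ℝ)] (frontier S) < ⊤)
    (φ : ℝ → EuclideanSpace ℝ (Fin (m + 1)) → EuclideanSpace ℝ (Fin (m + 1)))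
    (hφ0 : ∀ x, φ 0 x = x)
    (hgroup : ∀ s r x, φ (s + r) x = φ s (φ r x))
    (M : NNReal) (hM : LipschitzWith M (fun p : ℝ × EuclideanSpace ℝ (Fin (m + 1)) => φ p.1 p.2))
    (t : ℝ) (ht0 : 0 ≤ t) :
    (symmDiff (φ t '' S) S ⊆ ⋃ s ∈ Set.Icc 0 t, φ s '' frontier S) ∧
      volume (symmDiff (φ t '' S) S) ≤
        ENNReal.ofReal t * (max 2 (M : ℝ≥0∞)) ^ (m + 1) * μH[(m : ℝ)] (frontier S) := by
  have hsub := symmDiff_image_subset_iUnion_image_frontier hφ0 hgroup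
    (fun x => hM.continuous.comp (Continuous.prodMk_left x)) S ht0
  rw [iUnion_image_left, ← image_prod] at hsub ⊢
  refine ⟨hsub, ?_⟩
  have hdim : (((m + 1 : ℕ) : ℝ)) = (m : ℝ) + 1 := by push_cast; ring
  calc volume (symmDiff (φ t '' S) S)
      ≤ μH[(m : ℝ) + 1] ((fun p : ℝ × _ => φ p.1 p.2) '' (Icc 0 t ×ˢ frontier S)) := by
        refine (measure_mono hsub).trans ?_
        simpa [hdim] using EuclideanSpace.volume_le_hausdorffMeasure (Fin (m + 1)) _
    _ ≤ (M : ℝ≥0∞) ^ ((m : ℝ) + 1) * μH[(m : ℝ) + 1] (Icc 0 t ×ˢ frontier S) :=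
        hM.hausdorffMeasure_image_le (by positivity) _
    _ ≤ (M : ℝ≥0∞) ^ ((m : ℝ) + 1) * (ENNReal.ofReal t * μH[(m : ℝ)] (frontier S)) := by
        gcongr
        exact hausdorffMeasure_Icc_prod_le (Nat.cast_nonneg m) ht0 hS.ne
    _ = ENNReal.ofReal t * (M : ℝ≥0∞) ^ (m + 1) * μH[(m : ℝ)] (frontier S) := by
        rw [← hdim, rpow_natCast]
        ring
    _ ≤ ENNReal.ofReal t * (max 2 (M : ℝ≥0∞)) ^ (m + 1) * μH[(m : ℝ)] (frontier S) := by
        gcongr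
        exact le_max_right _ _

theorem stmt11 {m : ℕ} (S : Set (EuclideanSpace ℝ (Fin (m + 1))))
    (hS : μH[(m : ℝ)] (frontier S) < ⊤)
    (X : EuclideanSpace ℝ (Fin (m + 1)) → EuclideanSpace ℝ (Fin (m + 1))) (KX : NNReal)
    (hX : LipschitzWith KX X)
    (φ : ℝ → EuclideanSpace ℝ (Fin (m + 1)) → EuclideanSpace ℝ (Fin (m + 1)))
    (hφ0 : ∀ x, φ 0 x = x)
    (hode : ∀ x t, HasDerivAt (fun s => φ s x) (X (φ t x)) t)
    (hgroup : ∀ s r x, φ (s + r) x = φ s (φ r x))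
    (M : NNReal) (hM : LipschitzWith M (fun p : ℝ × EuclideanSpace ℝ (Fin (m + 1)) => φ p.1 p.2))
    (s₀ : ℝ) (hs₀ : 0 < s₀) (h2 : ∀ s : ℝ, |s| ≤ s₀ → LipschitzWith 2 (φ s))
    (t : ℝ) (ht0 : 0 ≤ t) (hts : t ≤ s₀) :
    (symmDiff (φ t '' S) S ⊆ ⋃ s ∈ Set.Icc 0 t, φ s '' frontier S) ∧
      volume (symmDiff (φ t '' S) S) ≤
        ENNReal.ofReal t * (max 2 (M : ℝ≥0∞)) ^ (m + 1) * μH[(m : ℝ)] (frontier S) :=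
  stmt11_general S hS φ hφ0 hgroup M hM t ht0
end

section
/- Let z ∈ Δ(φ_t(S), S) for a set S ⊂ ℝⁿ and a flow φ of a Lipschitz vector field. Then there exist u ∈ [0, t] and m ∈ ∂S such that φ_u(m) = z. -/
/-! Run the trajectory of `z` backwards: `s ↦ φ (-s) z` is continuous, starts at `z` and ends at
`φ (-t) z`, which lies in `S` iff `z ∈ φ t '' S`. So exactly one endpoint is in `S`, the connected
image of `[0, t]` meets `frontier S` at some `p = φ (-u) z`, and `φ u p = z`. -/

open Set

theorem IsPreconnected.inter_frontier_nonempty_s12 {E : Type*} [TopologicalSpace E] {K S : Set E}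
    (hK : IsPreconnected K) (hKS : (K ∩ S).Nonempty) (hKS' : (K \ S).Nonempty) :
    (K ∩ frontier S).Nonempty := by
  by_contra h
  have hcover : K ⊆ interior S ∪ interior Sᶜ := fun x hx =>
    compl_frontier_eq_union_interior (s := S) ▸ fun hxf => h ⟨x, hx, hxf⟩
  obtain ⟨a, haK, haS⟩ := hKS
  obtain ⟨b, hbK, hbS⟩ := hKS'
  have ha : a ∈ interior S := (hcover haK).resolve_right fun h => interior_subset h haS
  have hb : b ∈ interior Sᶜ := (hcover hbK).resolve_left fun h => hbS (interior_subset h)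
  obtain ⟨x, -, hxS, hxS'⟩ :=
    hK _ _ isOpen_interior isOpen_interior hcover ⟨a, haK, ha⟩ ⟨b, hbK, hb⟩
  exact interior_subset hxS' (interior_subset hxS)

theorem exists_mem_Icc_mem_frontier_of_xor {E : Type*} [TopologicalSpace E] {S : Set E}
    {γ : ℝ → E} {a b : ℝ} (hab : a ≤ b) (hγ : ContinuousOn γ (Icc a b))
    (h : Xor (γ a ∈ S) (γ b ∈ S)) : ∃ u ∈ Icc a b, γ u ∈ frontier S := by
  have crossing {x y : ℝ} (hx : x ∈ Icc a b) (hy : y ∈ Icc a b) (hxS : γ x ∈ S) (hyS : γ y ∉ S) :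
      ∃ u ∈ Icc a b, γ u ∈ frontier S := by
    obtain ⟨_, ⟨u, hu, rfl⟩, hu'⟩ := (isPreconnected_Icc.image γ hγ).inter_frontier_nonempty_s12
      ⟨_, mem_image_of_mem γ hx, hxS⟩ ⟨_, mem_image_of_mem γ hy, hyS⟩
    exact ⟨u, hu, hu'⟩
  rcases h with ⟨ha, hb⟩ | ⟨hb, ha⟩
  · exact crossing (left_mem_Icc.2 hab) (right_mem_Icc.2 hab) ha hb
  · exact crossing (right_mem_Icc.2 hab) (left_mem_Icc.2 hab) hb ha

section Flow

variable {α : Type*} {φ : ℝ → α → α} (hφ0 : ∀ x, φ 0 x = x)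
  (hgroup : ∀ s r x, φ (s + r) x = φ s (φ r x))
include hφ0 hgroup

theorem flow_apply_flow_neg (s : ℝ) (x : α) : φ s (φ (-s) x) = x := by
  rw [← hgroup, add_neg_cancel, hφ0]

theorem flow_neg_apply_flow (s : ℝ) (x : α) : φ (-s) (φ s x) = x := by
  rw [← hgroup, neg_add_cancel, hφ0]

theorem mem_flow_image_iff {S : Set α} {t : ℝ} {x : α} : x ∈ φ t '' S ↔ φ (-t) x ∈ S :=
  ⟨by rintro ⟨y, hy, rfl⟩; rwa [flow_neg_apply_flow hφ0 hgroup],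
    fun h => ⟨_, h, flow_apply_flow_neg hφ0 hgroup t x⟩⟩

end Flow

theorem stmt12_general {m : ℕ} (S : Set (EuclideanSpace ℝ (Fin (m + 1))))
    (X : EuclideanSpace ℝ (Fin (m + 1)) → EuclideanSpace ℝ (Fin (m + 1)))
    (φ : ℝ → EuclideanSpace ℝ (Fin (m + 1)) → EuclideanSpace ℝ (Fin (m + 1)))
    (hφ0 : ∀ x, φ 0 x = x)
    (hode : ∀ x t, HasDerivAt (fun s => φ s x) (X (φ t x)) t)
    (hgroup : ∀ s r x, φ (s + r) x = φ s (φ r x))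
    (t : ℝ) (ht : 0 ≤ t)
    (z : EuclideanSpace ℝ (Fin (m + 1))) (hz : z ∈ symmDiff (φ t '' S) S) :
    ∃ u ∈ Set.Icc 0 t, ∃ p ∈ frontier S, φ u p = z := by
  have hcont : Continuous fun s => φ (-s) z :=
    (continuous_iff_continuousAt.2 fun s => (hode z s).continuousAt).comp continuous_neg
  have hends : Xor (φ (-0) z ∈ S) (φ (-t) z ∈ S) := by
    rw [neg_zero, hφ0, ← mem_flow_image_iff hφ0 hgroup, xor_comm]
    exact hz
  obtain ⟨u, hu, hfront⟩ := exists_mem_Icc_mem_frontier_of_xor ht hcont.continuousOn hends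
  exact ⟨u, hu, _, hfront, flow_apply_flow_neg hφ0 hgroup u z⟩

theorem stmt12 {m : ℕ} (S : Set (EuclideanSpace ℝ (Fin (m + 1))))
    (X : EuclideanSpace ℝ (Fin (m + 1)) → EuclideanSpace ℝ (Fin (m + 1))) (KX : NNReal)
    (hX : LipschitzWith KX X)
    (φ : ℝ → EuclideanSpace ℝ (Fin (m + 1)) → EuclideanSpace ℝ (Fin (m + 1)))
    (hφ0 : ∀ x, φ 0 x = x)
    (hode : ∀ x t, HasDerivAt (fun s => φ s x) (X (φ t x)) t)
    (hgroup : ∀ s r x, φ (s + r) x = φ s (φ r x))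
    (t : ℝ) (ht : 0 ≤ t)
    (z : EuclideanSpace ℝ (Fin (m + 1))) (hz : z ∈ symmDiff (φ t '' S) S) :
    ∃ u ∈ Set.Icc 0 t, ∃ p ∈ frontier S, φ u p = z :=
  stmt12_general S X φ hφ0 hode hgroup t ht z hz
end

section
/- Let X be a Lipschitz vector field on ℝⁿ with ‖X‖_∞ < ∞ and flow φ_t, let w : ℝⁿ⁻¹ → ℝ be Lipschitz, V = {(x,z) : z > w(x)}, and define w_t(x) = inf{z : (x,z) ∈ φ_t(V)}. Then for almost every x (every point of differentiability of w): ∂_t|_{t=0⁺} w_t(x) = −⟨∇w(x), p₁(X(x, w(x)))⟩ + p₂(X(x, w(x))), where p₁, p₂ are the orthogonal projections onto ℝⁿ⁻¹ × {0} and {0}ⁿ⁻¹ × ℝ. -/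
/-!
The flow is invertible with inverse `φ (-t)`, so `(x, z) ∈ φ t '' V` exactly when the point
`φ (-t) (x, z)` lies strictly above the graph of `w`. Up to an error `O(t² + t |z - w x|)`,
`φ (-t) (x, z) = (x, z) - t • X (x, w x)`, and the height above the graph of `w` is
`(1 + Lip w)`-Lipschitz. Comparing heights shows that `w_t(x)` differs by `O(t²)` from
`w x - graphHeight w ((x, w x) - t • X (x, w x)) = w (x - t • p₁ X) + t * p₂ X`, even for merely
Lipschitz `w`; differentiability of `w` at `x` is only used to differentiate this at `t = 0`.
-/

open Set Filter Topology Asymptotics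

theorem HasDerivWithinAt.of_norm_sub_le_sq {F : Type*} [NormedAddCommGroup F] [NormedSpace ℝ F]
    {f g : ℝ → F} {g' : F} {s : Set ℝ} {a B : ℝ} (hg : HasDerivWithinAt g g' s a)
    (hfg : ∀ᶠ t in 𝓝[s] a, ‖f t - g t‖ ≤ B * ‖t - a‖ ^ 2) (ha : f a = g a) :
    HasDerivWithinAt f g' s a := by
  have hfg' : HasDerivWithinAt (fun t => f t - g t) 0 s a := by
    rw [hasDerivWithinAt_iff_isLittleO]
    simp only [ha, sub_self, sub_zero, smul_zero]
    exact (IsBigO.of_bound B (by simpa using hfg)).trans_isLittleO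
      ((isLittleO_pow_sub_sub a one_lt_two).mono nhdsWithin_le_nhds)
  simpa [Pi.add_def] using hfg'.add hg

/-- `hcrude` keeps the points of `{z | 0 < h z}` below `G` within `ε` of `w₀`, where `hfine` pins
`h z` to `z - G` up to `α * (β + ε)`; `α ≤ 1 / 2` absorbs the error at the test points `G + δ`. -/
theorem abs_sInf_setOf_pos_sub_le {h : ℝ → ℝ} {w₀ G ε α β : ℝ} (hα₀ : 0 ≤ α) (hα : α ≤ 1 / 2)
    (hβ : 0 ≤ β) (hG : |G - w₀| ≤ ε) (hcrude : ∀ z, |h z - (z - w₀)| ≤ ε)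
    (hfine : ∀ z, |h z - (z - G)| ≤ α * (β + |z - w₀|)) :
    |sInf {z | 0 < h z} - G| ≤ 2 * α * (β + ε) := by
  have hε : 0 ≤ ε := (abs_nonneg _).trans hG
  have hδ₀ : 0 ≤ α * (β + ε) := by positivity
  have hmem : ∀ δ, 2 * α * (β + ε) < δ → G + δ ∈ {z | 0 < h z} := by
    intro δ hδ
    have hdist : |G + δ - w₀| ≤ ε + δ := by
      rw [add_sub_right_comm]
      linarith [abs_add_le (G - w₀) δ, abs_of_pos (show 0 < δ by linarith)]
    have hh := (abs_le.1 (hfine (G + δ))).1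
    have : α * |G + δ - w₀| ≤ α * (ε + δ) := mul_le_mul_of_nonneg_left hdist hα₀
    have : α * δ ≤ δ / 2 := by nlinarith
    show 0 < h (G + δ)
    nlinarith
  have hlower : ∀ z ∈ {z | 0 < h z}, G - 2 * α * (β + ε) ≤ z := by
    intro z (hz : 0 < h z)
    rcases le_or_gt G z with hGz | hzG
    · linarith
    have hzw : |z - w₀| ≤ ε := by
      have := (abs_le.1 (hcrude z)).2
      have := (abs_le.1 hG).2
      exact abs_le.2 ⟨by linarith, by linarith⟩
    have := (abs_le.1 (hfine z)).2
    have : α * |z - w₀| ≤ α * ε := mul_le_mul_of_nonneg_left hzw hα₀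
    nlinarith
  have hne : {z | 0 < h z}.Nonempty := ⟨_, hmem (2 * α * (β + ε) + 1) (by linarith)⟩
  rw [abs_le]
  constructor
  · linarith [le_csInf hne hlower]
  · refine le_of_forall_pos_le_add fun η hη => ?_
    linarith [csInf_le ⟨_, hlower⟩ (hmem (2 * α * (β + ε) + η) (by linarith))]

section Flow

variable {E : Type*} [NormedAddCommGroup E] [NormedSpace ℝ E] {X : E → E} {φ : ℝ → E → E}
  {K : NNReal} {C : ℝ}

theorem flow_neg_flow (hX : LipschitzWith K X) (hφ0 : ∀ p, φ 0 p = p)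
    (hode : ∀ p t, HasDerivAt (fun s => φ s p) (X (φ t p)) t) (t : ℝ) (p : E) :
    φ (-t) (φ t p) = p := by
  have h := ODE_solution_unique_univ (v := fun _ => X) (s := fun _ => univ) (t₀ := t)
    (f := fun s => φ s p) (g := fun s => φ (s - t) (φ t p)) (fun _ => hX.lipschitzOnWith)
    (fun s => ⟨hode p s, trivial⟩)
    (fun s => ⟨(hode (φ t p) (s - t)).comp_sub_const s t, trivial⟩) (by simp [hφ0])
  simpa [hφ0] using (congrFun h 0).symm

theorem image_flow_eq_preimage (hX : LipschitzWith K X) (hφ0 : ∀ p, φ 0 p = p)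
    (hode : ∀ p t, HasDerivAt (fun s => φ s p) (X (φ t p)) t) (t : ℝ) :
    image (φ t) = preimage (φ (-t)) :=
  image_eq_preimage_of_inverse (flow_neg_flow hX hφ0 hode t)
    fun q => by simpa using flow_neg_flow hX hφ0 hode (-t) q

theorem norm_flow_sub_le (hXb : ∀ p, ‖X p‖ ≤ C) (hφ0 : ∀ p, φ 0 p = p)
    (hode : ∀ p t, HasDerivAt (fun s => φ s p) (X (φ t p)) t) (t : ℝ) (p : E) :
    ‖φ t p - p‖ ≤ C * |t| := by
  simpa [hφ0] using convex_univ.norm_image_sub_le_of_norm_hasDerivWithin_le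
    (f := fun s => φ s p) (fun s _ => (hode p s).hasDerivWithinAt) (fun s _ => hXb _)
    (mem_univ 0) (mem_univ t)

theorem norm_flow_sub_sub_smul_le (hX : LipschitzWith K X) (hXb : ∀ p, ‖X p‖ ≤ C)
    (hφ0 : ∀ p, φ 0 p = p) (hode : ∀ p t, HasDerivAt (fun s => φ s p) (X (φ t p)) t)
    (t : ℝ) (p q : E) :
    ‖φ t p - p - t • X q‖ ≤ K * |t| * (C * |t| + ‖p - q‖) := by
  have hC : 0 ≤ C := (norm_nonneg _).trans (hXb p)
  have hbound : ∀ s ∈ uIcc 0 t, ‖X (φ s p) - X q‖ ≤ K * (C * |t| + ‖p - q‖) := by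
    intro s hs
    have hst : |s| ≤ |t| := by simpa using abs_sub_left_of_mem_uIcc hs
    calc ‖X (φ s p) - X q‖ ≤ K * ‖φ s p - q‖ := hX.norm_sub_le _ _
      _ ≤ K * (‖φ s p - p‖ + ‖p - q‖) := by gcongr; exact norm_sub_le_norm_sub_add_norm_sub _ _ _
      _ ≤ K * (C * |t| + ‖p - q‖) := by
        gcongr
        exact (norm_flow_sub_le hXb hφ0 hode s p).trans (by gcongr)
  have := (convex_uIcc 0 t).norm_image_sub_le_of_norm_hasDerivWithin_le
    (f := fun s => φ s p - p - s • X q) (f' := fun s => X (φ s p) - X q)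
    (fun s _ => by
      simpa [Pi.sub_def] using
        (((hode p s).sub_const p).sub ((hasDerivAt_id' s).smul_const (X q))).hasDerivWithinAt)
    hbound left_mem_uIcc right_mem_uIcc
  simpa [hφ0, mul_assoc, mul_comm, mul_left_comm] using this

end Flow

section Graph

variable {E : Type*} [NormedAddCommGroup E] {w : E → ℝ}

def graphHeight (w : E → ℝ) (P : E × ℝ) : ℝ := P.2 - w P.1

theorem abs_graphHeight_sub_le {Kw : NNReal} (hw : LipschitzWith Kw w) (P Q : E × ℝ) :
    |graphHeight w P - graphHeight w Q| ≤ (1 + Kw) * ‖P - Q‖ := by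
  have h₂ : |P.2 - Q.2| ≤ ‖P - Q‖ := norm_snd_le (P - Q)
  have h₁ : |w P.1 - w Q.1| ≤ Kw * ‖P - Q‖ :=
    (hw.norm_sub_le _ _).trans (by gcongr; exact norm_fst_le (P - Q))
  calc |graphHeight w P - graphHeight w Q| = |(P.2 - Q.2) - (w P.1 - w Q.1)| := by
        unfold graphHeight; ring_nf
    _ ≤ |P.2 - Q.2| + |w P.1 - w Q.1| := abs_sub _ _
    _ ≤ (1 + Kw) * ‖P - Q‖ := by linarith

theorem hasFDerivAt_graphHeight [NormedSpace ℝ E] {P : E × ℝ} {w' : E →L[ℝ] ℝ}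
    (hw : HasFDerivAt w w' P.1) :
    HasFDerivAt (graphHeight w)
      (ContinuousLinearMap.snd ℝ E ℝ - w'.comp (ContinuousLinearMap.fst ℝ E ℝ)) P :=
  hasFDerivAt_snd.sub (hw.comp P hasFDerivAt_fst)

end Graph

theorem abs_sInf_graphHeight_flow_sub_le {E : Type*} [NormedAddCommGroup E] [NormedSpace ℝ E]
    {X : E × ℝ → E × ℝ} {φ : ℝ → E × ℝ → E × ℝ} {K Kw : NNReal} {C : ℝ} {w : E → ℝ}
    (hX : LipschitzWith K X) (hXb : ∀ p, ‖X p‖ ≤ C) (hφ0 : ∀ p, φ 0 p = p)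
    (hode : ∀ p t, HasDerivAt (fun s => φ s p) (X (φ t p)) t) (hw : LipschitzWith Kw w)
    (x : E) {t : ℝ} (ht : 0 ≤ t) (hsmall : (1 + Kw) * K * t ≤ 1 / 2) :
    |sInf {z | 0 < graphHeight w (φ (-t) (x, z))}
        - (w x - graphHeight w ((x, w x) - t • X (x, w x)))|
      ≤ 2 * ((1 + Kw) * K * t) * (C * t + (1 + Kw) * (C * t)) := by
  set q₀ : E × ℝ := (x, w x)
  have hC : 0 ≤ C := (norm_nonneg _).trans (hXb q₀)
  refine abs_sInf_setOf_pos_sub_le (w₀ := w x) (by positivity) hsmall (by positivity) ?_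
    (fun z => ?_) (fun z => ?_)
  · have hq₀ : graphHeight w q₀ = 0 := sub_self _
    calc |w x - graphHeight w (q₀ - t • X q₀) - w x|
        = |graphHeight w q₀ - graphHeight w (q₀ - t • X q₀)| := by rw [hq₀]; ring_nf
      _ ≤ (1 + Kw) * ‖t • X q₀‖ := by simpa using abs_graphHeight_sub_le hw q₀ (q₀ - t • X q₀)
      _ ≤ (1 + Kw) * (C * t) := by
        rw [norm_smul, Real.norm_eq_abs, abs_of_nonneg ht, mul_comm t]
        gcongr
        exact hXb q₀
  · calc |graphHeight w (φ (-t) (x, z)) - graphHeight w (x, z)|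
        ≤ (1 + Kw) * ‖φ (-t) (x, z) - (x, z)‖ := abs_graphHeight_sub_le hw _ _
      _ ≤ (1 + Kw) * (C * t) := by
        gcongr
        simpa [abs_of_nonneg ht] using norm_flow_sub_le hXb hφ0 hode (-t) (x, z)
  · have hshift : z - (w x - graphHeight w (q₀ - t • X q₀))
        = graphHeight w ((x, z) - t • X q₀) := by
      simp only [graphHeight, Prod.snd_sub, Prod.smul_snd, smul_eq_mul, Prod.fst_sub,
        Prod.smul_fst, q₀]
      ring
    have hdist : ‖(x, z) - q₀‖ = |z - w x| := by simp [q₀]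
    rw [hshift]
    calc |graphHeight w (φ (-t) (x, z)) - graphHeight w ((x, z) - t • X q₀)|
        ≤ (1 + Kw) * ‖φ (-t) (x, z) - ((x, z) - t • X q₀)‖ := abs_graphHeight_sub_le hw _ _
      _ ≤ (1 + Kw) * (K * t * (C * t + |z - w x|)) := by
        gcongr
        simpa [abs_of_nonneg ht, hdist, sub_add] using
          norm_flow_sub_sub_smul_le hX hXb hφ0 hode (-t) (x, z) q₀
      _ = (1 + Kw) * K * t * (C * t + |z - w x|) := by ring

theorem stmt17 {m : ℕ}
    (X : EuclideanSpace ℝ (Fin m) × ℝ → EuclideanSpace ℝ (Fin m) × ℝ) (K : NNReal)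
    (hX : LipschitzWith K X) (C : ℝ) (hXb : ∀ p, ‖X p‖ ≤ C)
    (φ : ℝ → EuclideanSpace ℝ (Fin m) × ℝ → EuclideanSpace ℝ (Fin m) × ℝ)
    (hφ0 : ∀ p, φ 0 p = p)
    (hode : ∀ p t, HasDerivAt (fun s => φ s p) (X (φ t p)) t)
    (w : EuclideanSpace ℝ (Fin m) → ℝ) (Kw : NNReal) (hw : LipschitzWith Kw w)
    (x : EuclideanSpace ℝ (Fin m)) (hdiff : DifferentiableAt ℝ w x) :
    HasDerivWithinAt
      (fun t => sInf {z : ℝ |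
        (x, z) ∈ φ t '' {p : EuclideanSpace ℝ (Fin m) × ℝ | w p.1 < p.2}})
      (-(fderiv ℝ w x (X (x, w x)).1) + (X (x, w x)).2) (Set.Ici 0) 0 := by
  set q₀ := (x, w x)
  have hS : ∀ t, {z | (x, z) ∈ φ t '' {p | w p.1 < p.2}}
      = {z | 0 < graphHeight w (φ (-t) (x, z))} := by
    intro t
    ext z
    simp [image_flow_eq_preimage hX hφ0 hode t, graphHeight]
  have hline : HasDerivAt (fun t : ℝ => q₀ - t • X q₀) (-X q₀) 0 := by
    simpa using ((hasDerivAt_id' (0 : ℝ)).smul_const (X q₀)).const_sub q₀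
  have hg : HasDerivAt (fun t : ℝ => w x - graphHeight w (q₀ - t • X q₀))
      (-(fderiv ℝ w x (X q₀).1) + (X q₀).2) 0 := by
    simpa [Function.comp_def, neg_add_eq_sub] using
      ((hasFDerivAt_graphHeight (P := q₀) hdiff.hasFDerivAt).comp_hasDerivAt_of_eq (0 : ℝ) hline
        (by simp [q₀])).const_sub (w x)
  have hsmall : ∀ᶠ t : ℝ in 𝓝 0, (1 + Kw : ℝ) * K * t ≤ 1 / 2 := by
    have : Tendsto (fun t : ℝ => (1 + Kw) * K * t) (𝓝 0) (𝓝 (0 : ℝ)) := by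
      simpa using (tendsto_id (x := 𝓝 (0 : ℝ))).const_mul ((1 + Kw) * K : ℝ)
    exact this.eventually (ge_mem_nhds (by norm_num : (0 : ℝ) < 1 / 2))
  refine hg.hasDerivWithinAt.of_norm_sub_le_sq
    (B := 2 * ((1 + Kw) * K) * (C + (1 + Kw) * C)) ?_ ?_
  · filter_upwards [self_mem_nhdsWithin, nhdsWithin_le_nhds hsmall] with t (ht : 0 ≤ t) hts
    rw [hS, Real.norm_eq_abs, Real.norm_eq_abs, sub_zero, sq_abs]
    calc _ ≤ 2 * ((1 + Kw) * K * t) * (C * t + (1 + Kw) * (C * t)) :=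
          abs_sInf_graphHeight_flow_sub_le hX hXb hφ0 hode hw x ht hts
      _ = _ := by ring
  · rw [hS]
    simp only [graphHeight, neg_zero, hφ0, sub_pos, zero_smul, sub_zero, sub_self, q₀]
    exact csInf_Ioi
end
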